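/- arXiv:1907.03481 — 2 statements merged into one kernel-verified Lean document; each statement's English description precedes it below -/
import Mathlib

section
/- The set of natural transformations from the squaring functor S (where S(X) = X × X on types) to the identity functor on types is in bijection with Bool (there are exactly two such transformations, the two projections). (This is the semantic content of the type isomorphism ∀X. X⇒X⇒X ≡ 1+1.) -/
/-!
Since `X × X ≅ (Bool → X)` naturally in `X`, the squaring functor is corepresented by `Bool`.
By the co-Yoneda lemma, natural transformations from it to the identity functor are the elements
of `Bool`; `true` and `false` correspond to the two projections.
-/

open CategoryTheory Opposite

/-- The squaring functor `X ↦ X × X` on types. -/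
def squaringFunctor : Type ⥤ Type where
  obj X := X × X
  map f := TypeCat.ofHom fun p => (f p.1, f p.2)

def squaringFunctorIsoCoyonedaBool : squaringFunctor ≅ coyoneda.obj (op Bool) :=
  NatIso.ofComponents
    (fun X => ((Equiv.boolArrowEquivProd X).symm.trans TypeCat.homEquiv.symm).toIso)
    (fun f => by ext p; exact ConcreteCategory.hom_ext _ _ fun c => by cases c <;> rfl)

theorem squaring_to_id_equiv_bool :
    Nonempty ((squaringFunctor ⟶ 𝟭 (Type)) ≃ Bool) :=
  ⟨squaringFunctorIsoCoyonedaBool.homFromEquiv.trans coyonedaEquiv⟩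
end

section
/- (Correctness of the strongly-connected-components criterion for 2-SAT.) Let V be a finite type equipped with a fixed-point-free involution star : V → V, and let E be a skew-symmetric relation on V (E v w ↔ E (star w) (star v)). Suppose that no vertex v is in the same strongly connected component as star v, i.e., there is no v such that both star v is reachable from v and v is reachable from star v. Then there exists a set S of vertices such that: (1) for every v, exactly one of v and star v belongs to S; and (2) S is closed under E, i.e., if v ∈ S and E v w then w ∈ S. -/
/-!
Reachability is a preorder which the skew-symmetry of `E` makes `star` reverse. Extend its
quotient partial order to a linear order `f` and put `v` into `S` when `f (star v) < f v`: this
chooses exactly one literal of every pair, since `v` and `star v` lie in different strongly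
connected components, and `S` is upward closed because `f` is monotone while `star` is antitone.
-/

open Relation

theorem Relation.ReflTransGen.star_swap {V : Type*} {E : V → V → Prop} {star : V → V}
    (hskew : ∀ v w, E v w → E (star w) (star v)) {v w : V} (h : ReflTransGen E v w) :
    ReflTransGen E (star w) (star v) :=
  (h.lift star hskew).swap

theorem isUpperSet_setOf_lt_of_monotone_of_antitone {α β : Type*} [Preorder α] [Preorder β]
    {f : α → β} {star : α → α} (hf : Monotone f) (hstar : Antitone star) :
    IsUpperSet {a | f (star a) < f a} := fun _ _ hab ha =>
  (hf (hstar hab)).trans_lt (ha.trans_le (hf hab))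

theorem exists_isUpperSet_xor_of_antitone_involutive {α : Type*} [Preorder α] {star : α → α}
    (hinv : Function.Involutive star) (hstar : Antitone star)
    (hsep : ∀ a, ¬ AntisymmRel (· ≤ ·) a (star a)) :
    ∃ S : Set α, (∀ a, Xor (a ∈ S) (star a ∈ S)) ∧ IsUpperSet S := by
  let f : α → LinearExtension (Antisymmetrization α (· ≤ ·)) :=
    fun a => toLinearExtension (toAntisymmetrization (· ≤ ·) a)
  have hf : Monotone f := fun _ _ h => toLinearExtension.monotone (toAntisymmetrization_mono h)
  have hne : ∀ a, f a ≠ f (star a) := fun a h => hsep a (Quotient.exact h)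
  refine ⟨{a | f (star a) < f a}, fun a => ?_, isUpperSet_setOf_lt_of_monotone_of_antitone hf hstar⟩
  simp only [Set.mem_ofPred_eq, hinv a]
  rcases (hne a).lt_or_gt with h | h
  · exact Or.inr ⟨h, h.asymm⟩
  · exact Or.inl ⟨h, h.asymm⟩

theorem two_sat_scc_criterion_general {V : Type u} (star : V → V)
    (hinv : ∀ v, star (star v) = v)
    (E : V → V → Prop)
    (hskew : ∀ v w, E v w ↔ E (star w) (star v))
    (hscc : ¬ ∃ v, Relation.ReflTransGen E v (star v) ∧ Relation.ReflTransGen E (star v) v) :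
    ∃ S : Set V,
      (∀ v, Xor' (v ∈ S) (star v ∈ S)) ∧
      (∀ v w, v ∈ S → E v w → w ∈ S) := by
  let _ : Preorder V :=
    { le := ReflTransGen E
      le_refl := fun _ => ReflTransGen.refl
      le_trans := fun _ _ _ => ReflTransGen.trans }
  obtain ⟨S, hxor, hup⟩ := exists_isUpperSet_xor_of_antitone_involutive (α := V) hinv
    (fun _ _ h => ReflTransGen.star_swap (fun v w => (hskew v w).1) h)
    (fun v h => hscc ⟨v, h.1, h.2⟩)
  exact ⟨S, hxor, fun _ _ hv hE => hup (ReflTransGen.single hE) hv⟩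

theorem two_sat_scc_criterion {V : Type u} [Fintype V] (star : V → V)
    (hinv : ∀ v, star (star v) = v)
    (hfree : ∀ v, star v ≠ v)
    (E : V → V → Prop)
    (hskew : ∀ v w, E v w ↔ E (star w) (star v))
    (hscc : ¬ ∃ v, Relation.ReflTransGen E v (star v) ∧ Relation.ReflTransGen E (star v) v) :
    ∃ S : Set V,
      (∀ v, Xor' (v ∈ S) (star v ∈ S)) ∧
      (∀ v w, v ∈ S → E v w → w ∈ S) :=
  two_sat_scc_criterion_general star hinv E hskew hscc
end
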